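/- Every graph admits a polyline RAC drawing with at most three bends per edge. -/

import Mathlib

open Bornology

noncomputable section

/-- The Euclidean plane. -/
abbrev Pt : Type := EuclideanSpace ℝ (Fin 2)

/-- The consecutive pairs of points of a polyline. -/
def polySegs (l : List Pt) : List (Pt × Pt) := l.zip l.tail

/-- The point set of a polyline. -/
def polyImage (l : List Pt) : Set Pt := ⋃ s ∈ polySegs l, segment ℝ s.1 s.2

/-- A drawing of a multigraph with edge set `E`, endpoint map `ends` and vertex set `V`,
where each edge is drawn as a polyline joining the positions of its endpoints, and
no edge passes through the position of a vertex other than its endpoints. -/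
structure MultiDrawing {V E : Type*} (ends : E → Sym2 V) where
  pos : V → Pt
  inj : Function.Injective pos
  pts : E → List Pt
  ends_ok : ∀ e u v, ends e = s(u, v) →
    ((pts e).head? = some (pos u) ∧ (pts e).getLast? = some (pos v)) ∨
    ((pts e).head? = some (pos v) ∧ (pts e).getLast? = some (pos u))
  through : ∀ e u v, ends e = s(u, v) →
    polyImage (pts e) ∩ Set.range pos = {pos u, pos v}

variable {V E : Type*}

/-- The points of the plane occupied by vertices. -/
def vertexPts {ends : E → Sym2 V} (D : MultiDrawing ends) : Set Pt := Set.range D.pos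

/-- The points where the edge `e` is crossed by some other edge. -/
def crossOn {ends : E → Sym2 V} (D : MultiDrawing ends) (e : E) : Set Pt :=
  { x | ∃ e', e' ≠ e ∧ x ∈ polyImage (D.pts e) ∧ x ∈ polyImage (D.pts e') ∧ x ∉ vertexPts D }

/-- All crossing points of the drawing. -/
def crossingPts {ends : E → Sym2 V} (D : MultiDrawing ends) : Set Pt := ⋃ e, crossOn D e

/-- The vertex points together with the crossing points. -/
def featurePts {ends : E → Sym2 V} (D : MultiDrawing ends) : Set Pt :=
  vertexPts D ∪ crossingPts D

/-- A drawing is 1-plane if every edge is crossed at most once. -/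
def OnePlane {ends : E → Sym2 V} (D : MultiDrawing ends) : Prop :=
  ∀ e, (crossOn D e).Subsingleton

/-- A drawing is plane if it has no crossings at all. -/
def PlaneDrawing {ends : E → Sym2 V} (D : MultiDrawing ends) : Prop := crossingPts D = ∅

/-- The set of points covered by the drawing. -/
def drawImage {ends : E → Sym2 V} (D : MultiDrawing ends) : Set Pt :=
  vertexPts D ∪ ⋃ e, polyImage (D.pts e)

/-- A face of the drawing: a connected component of the complement of the drawing. -/
def IsFace {ends : E → Sym2 V} (D : MultiDrawing ends) (F : Set Pt) : Prop :=
  ∃ x, x ∉ drawImage D ∧ F = connectedComponentIn (drawImage D)ᶜ x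

/-- The degree of a face: the number of vertices and crossings on its boundary. -/
def faceDeg {ends : E → Sym2 V} (D : MultiDrawing ends) (F : Set Pt) : ℕ :=
  (closure F ∩ featurePts D).ncard

/-- A 1-plane drawing is triangulated if every face has degree three. -/
def Triangulated {ends : E → Sym2 V} (D : MultiDrawing ends) : Prop :=
  ∀ F, IsFace D F → faceDeg D F = 3

/-- The edges `e₁` and `e₂` cross each other. -/
def Cross {ends : E → Sym2 V} (D : MultiDrawing ends) (e₁ e₂ : E) : Prop :=
  e₁ ≠ e₂ ∧ ∃ x, x ∈ polyImage (D.pts e₁) ∧ x ∈ polyImage (D.pts e₂) ∧ x ∉ vertexPts D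

/-- `x` lies strictly inside the bounded region enclosed by the closed curve `C`. -/
def InsideRegion (C : Set Pt) (x : Pt) : Prop :=
  x ∉ C ∧ IsBounded (connectedComponentIn Cᶜ x)

/-- The edge `e` is free of crossings. -/
def CrossFree {ends : E → Sym2 V} (D : MultiDrawing ends) (e : E) : Prop := crossOn D e = ∅

/-- The crossing pair of edges `e₁, e₂` forms an empty kite: their four endpoints induce a
`K₄` whose four boundary edges are crossing-free and bound a region containing no vertex. -/
def FormsEmptyKite {ends : E → Sym2 V} (D : MultiDrawing ends) (e₁ e₂ : E) : Prop :=
  Cross D e₁ e₂ ∧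
  ∃ (a b c d : V) (eab ebc ecd eda : E),
    [a, b, c, d].Pairwise (· ≠ ·) ∧
    ends e₁ = s(a, c) ∧ ends e₂ = s(b, d) ∧
    ends eab = s(a, b) ∧ ends ebc = s(b, c) ∧ ends ecd = s(c, d) ∧ ends eda = s(d, a) ∧
    CrossFree D eab ∧ CrossFree D ebc ∧ CrossFree D ecd ∧ CrossFree D eda ∧
    ∀ w : V, ¬ InsideRegion
      (polyImage (D.pts eab) ∪ polyImage (D.pts ebc) ∪
        polyImage (D.pts ecd) ∪ polyImage (D.pts eda)) (D.pos w)

/-- The simple graph underlying a multigraph. -/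
def mGraph (ends : E → Sym2 V) : SimpleGraph V where
  Adj u v := u ≠ v ∧ ∃ e, ends e = s(u, v)
  symm := by
    refine ⟨?_⟩
    rintro u v ⟨h, e, he⟩
    exact ⟨Ne.symm h, e, by rwa [Sym2.eq_swap]⟩
  loopless := by refine ⟨?_⟩; rintro u ⟨h, -⟩; exact h rfl

/-- `{u, v}` is a separation pair of the graph `G` restricted to the vertex set `S`. -/
def SepPairOn (G : SimpleGraph V) (S : Set V) (u v : V) : Prop :=
  u ≠ v ∧ ¬ (G.induce (S \ {u, v})).Connected

/-- A graph is 2-connected: at least 3 vertices and removing any single vertex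
leaves it connected. -/
def TwoConn (G : SimpleGraph V) : Prop :=
  3 ≤ Nat.card V ∧ ∀ S : Set V, S.ncard ≤ 1 → (G.induce Sᶜ).Connected

/-- A graph is 3-connected: at least 4 vertices and removing any two vertices
leaves it connected. -/
def ThreeConn (G : SimpleGraph V) : Prop :=
  4 ≤ Nat.card V ∧ ∀ S : Set V, S.ncard ≤ 2 → (G.induce Sᶜ).Connected

/-- The multigraph is simple: no loops and no parallel edges. -/
def SimpleM (ends : E → Sym2 V) : Prop :=
  (∀ e, ¬ (ends e).IsDiag) ∧ ∀ e e', ends e = ends e' → e = e'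

/-- Every edge is drawn as a straight-line segment (no bends). -/
def StraightLine {ends : E → Sym2 V} (D : MultiDrawing ends) : Prop :=
  ∀ e, (D.pts e).length ≤ 2

/-- Every edge is drawn as a polyline with at most `k` bends. -/
def AtMostBends {ends : E → Sym2 V} (D : MultiDrawing ends) (k : ℕ) : Prop :=
  ∀ e, (D.pts e).length ≤ k + 2

/-- A RAC drawing: any two edges that cross do so at a right angle. -/
def RACDrawing {ends : E → Sym2 V} (D : MultiDrawing ends) : Prop :=
  ∀ e₁ e₂, e₁ ≠ e₂ → ∀ x, x ∈ polyImage (D.pts e₁) → x ∈ polyImage (D.pts e₂) →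
    x ∉ vertexPts D →
    ∃ s ∈ polySegs (D.pts e₁), ∃ t ∈ polySegs (D.pts e₂),
      x ∈ segment ℝ s.1 s.2 ∧ x ∈ segment ℝ t.1 t.2 ∧
      @inner ℝ Pt _ (s.2 - s.1) (t.2 - t.1) = 0

/-- A drawing of a simple graph `G`. -/
abbrev GDrawing {V : Type*} (G : SimpleGraph V) : Type _ :=
  MultiDrawing (fun e : G.edgeSet => (e : Sym2 V))

/-!
Place the vertices on the x-axis at distinct integer abscissae and give every edge its own
offset `δ ∈ [0, 1/2)`. The edge is drawn as a tent: a steep foot from its left end to height `1`,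
leaning right by `δ`, a segment of slope `1` up to an apex, a segment of slope `-1` down to height
`1`, and a steep foot, leaning left by `δ`, down to its right end. Below height `1` every foot stays
within distance `1/2` of its vertex, and feet at the same vertex have distinct slopes, so distinct
edges meet there only at vertices. Above height `1` segments of equal slope of distinct edges lie
on distinct parallel lines, so every crossing is between a segment of slope `1` and one of slope
`-1`, at a right angle.
-/

open Function Set

lemma eq_of_intCast_add_eq {m n : ℤ} {s t : ℝ} (hs : |s| < 1 / 2) (ht : |t| < 1 / 2)
    (h : (m : ℝ) + s = n + t) : s = t := by
  have hmn : |((m - n : ℤ) : ℝ)| < 1 := by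
    rw [Int.cast_sub, show (m : ℝ) - n = t - s by linarith]
    exact (abs_sub _ _).trans_lt (by linarith)
  obtain rfl : m = n := sub_eq_zero.mp (Int.abs_lt_one_iff.mp (by exact_mod_cast hmn))
  linarith

lemma exists_injective_mem_Ico (α : Type*) [Countable α] :
    ∃ δ : α → ℝ, Injective δ ∧ ∀ a, δ a ∈ Ico 0 (1 / 2) := by
  obtain ⟨f, hf⟩ := exists_injective_nat α
  refine ⟨fun a => ((f a : ℝ) + 3)⁻¹, fun a b h => hf ?_, fun a => ⟨by positivity, ?_⟩⟩
  · simpa using h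
  · rw [inv_lt_comm₀ (by positivity) (by norm_num)]
    linarith [(f a).cast_nonneg (α := ℝ)]

lemma segment_coords {u v p : Pt} (h : p ∈ segment ℝ u v) :
    ∃ θ ∈ Icc (0 : ℝ) 1, ∀ i, p i = u i + θ * (v i - u i) := by
  rw [segment_eq_image'] at h
  obtain ⟨θ, hθ, rfl⟩ := h
  exact ⟨θ, hθ, fun i => by simp⟩

section Arc

variable {a b δ : ℝ} {p : Pt}

def arcApex (a b δ : ℝ) : Pt := !₂[(a + b) / 2, 1 + (b - a) / 2 - δ]

def arc (a b δ : ℝ) : List Pt :=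
  [!₂[a, 0], !₂[a + δ, 1], arcApex a b δ, !₂[b - δ, 1], !₂[b, 0]]

lemma mem_polyImage_arc :
    p ∈ polyImage (arc a b δ) ↔
      p ∈ segment ℝ !₂[a, 0] !₂[a + δ, 1] ∨ p ∈ segment ℝ !₂[a + δ, 1] (arcApex a b δ) ∨
      p ∈ segment ℝ (arcApex a b δ) !₂[b - δ, 1] ∨ p ∈ segment ℝ !₂[b - δ, 1] !₂[b, 0] := by
  simp [polyImage, polySegs, arc]

lemma arc_trichotomy (hab : 2 * δ ≤ b - a) (hp : p ∈ polyImage (arc a b δ)) :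
    (0 ≤ p 1 ∧ p 1 ≤ 1 ∧ (p 0 = a + p 1 * δ ∨ p 0 = b - p 1 * δ)) ∨
    (1 ≤ p 1 ∧ p ∈ segment ℝ !₂[a + δ, 1] (arcApex a b δ) ∧ p 0 = a + δ + (p 1 - 1)) ∨
    (1 ≤ p 1 ∧ p ∈ segment ℝ (arcApex a b δ) !₂[b - δ, 1] ∧ p 0 = b - δ - (p 1 - 1)) := by
  rcases mem_polyImage_arc.mp hp with h | h | h | h <;>
    obtain ⟨θ, ⟨hθ0, hθ1⟩, hc⟩ := segment_coords h <;>
    have h0 := hc 0 <;> have h1 := hc 1 <;>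
    simp only [arcApex, PiLp.toLp_apply, Matrix.cons_val_zero, Matrix.cons_val_one] at h0 h1
  · exact Or.inl ⟨by linarith, by linarith, Or.inl (by rw [h0, h1]; ring)⟩
  · exact Or.inr (Or.inl ⟨by nlinarith, h, by rw [h0, h1]; ring⟩)
  · exact Or.inr (Or.inr ⟨by nlinarith, h, by rw [h0, h1]; ring⟩)
  · exact Or.inl ⟨by linarith, by linarith, Or.inr (by rw [h0, h1]; ring)⟩

lemma polyImage_arc_inter_axis (hab : 2 * δ ≤ b - a) :
    polyImage (arc a b δ) ∩ {p | p 1 = 0} = {!₂[a, 0], !₂[b, 0]} := by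
  ext p
  constructor
  · rintro ⟨hp, hp1 : p 1 = 0⟩
    rcases arc_trichotomy hab hp with ⟨-, -, h | h⟩ | ⟨h, -⟩ | ⟨h, -⟩
    · left; ext i; fin_cases i <;> simp [h, hp1]
    · right; ext i; fin_cases i <;> simp [h, hp1]
    all_goals linarith
  · rintro (rfl | rfl)
    · exact ⟨mem_polyImage_arc.mpr (Or.inl (left_mem_segment ℝ _ _)), by simp⟩
    · exact ⟨mem_polyImage_arc.mpr (Or.inr (Or.inr (Or.inr (right_mem_segment ℝ _ _)))),
        by simp⟩

lemma rise_mem_polySegs_arc (a b δ : ℝ) :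
    (!₂[a + δ, 1], arcApex a b δ) ∈ polySegs (arc a b δ) := by
  simp [polySegs, arc]

lemma fall_mem_polySegs_arc (a b δ : ℝ) :
    (arcApex a b δ, !₂[b - δ, 1]) ∈ polySegs (arc a b δ) := by
  simp [polySegs, arc]

lemma inner_arc_rise_fall (a b δ a' b' δ' : ℝ) :
    inner ℝ (arcApex a b δ - !₂[a + δ, 1]) (!₂[b' - δ', 1] - arcApex a' b' δ') = 0 := by
  simp only [arcApex, PiLp.inner_apply, Fin.sum_univ_two, PiLp.sub_apply, Matrix.cons_val_zero,
    Matrix.cons_val_one, RCLike.inner_apply, conj_trivial]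
  ring

def OnFoot (δ : ℝ) (p : Pt) : Prop :=
  0 ≤ p 1 ∧ p 1 ≤ 1 ∧ ∃ (c : ℤ) (s : ℝ), |s| = δ ∧ p 0 = c + p 1 * s

def OnRise (δ : ℝ) (p : Pt) : Prop := 1 ≤ p 1 ∧ ∃ c : ℤ, p 0 = c + δ + (p 1 - 1)

def OnFall (δ : ℝ) (p : Pt) : Prop := 1 ≤ p 1 ∧ ∃ c : ℤ, p 0 = c - δ - (p 1 - 1)

variable {δ' : ℝ}

lemma OnFoot.eq (h : OnFoot δ p) (h' : OnFoot δ' p) (hp : p 1 ≠ 0) (hδ : δ < 1 / 2)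
    (hδ' : δ' < 1 / 2) : δ = δ' := by
  obtain ⟨hp0, hp1, c, s, rfl, hc⟩ := h
  obtain ⟨-, -, c', s', rfl, hc'⟩ := h'
  have small : ∀ t : ℝ, |t| < 1 / 2 → |p 1 * t| < 1 / 2 := fun t ht => by
    rw [abs_mul, abs_of_nonneg hp0]
    nlinarith [abs_nonneg t]
  have := eq_of_intCast_add_eq (small s hδ) (small s' hδ') (hc.symm.trans hc')
  rw [mul_left_cancel₀ hp this]

lemma OnRise.onFoot (h : OnRise δ p) (hδ : 0 ≤ δ) (hp : p 1 ≤ 1) : OnFoot δ p := by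
  obtain ⟨hp1, c, hc⟩ := h
  exact ⟨by linarith, hp, c, δ, abs_of_nonneg hδ, by rw [hc, le_antisymm hp hp1]; ring⟩

lemma OnFall.onFoot (h : OnFall δ p) (hδ : 0 ≤ δ) (hp : p 1 ≤ 1) : OnFoot δ p := by
  obtain ⟨hp1, c, hc⟩ := h
  exact ⟨by linarith, hp, c, -δ, by rw [abs_neg, abs_of_nonneg hδ],
    by rw [hc, le_antisymm hp hp1]; ring⟩

lemma OnRise.eq (h : OnRise δ p) (h' : OnRise δ' p) (hδ : δ ∈ Ico 0 (1 / 2))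
    (hδ' : δ' ∈ Ico 0 (1 / 2)) : δ = δ' := by
  obtain ⟨-, c, hc⟩ := h
  obtain ⟨-, c', hc'⟩ := h'
  exact eq_of_intCast_add_eq (m := c) (n := c') ((abs_of_nonneg hδ.1).trans_lt hδ.2)
    ((abs_of_nonneg hδ'.1).trans_lt hδ'.2) (by linarith)

lemma OnFall.eq (h : OnFall δ p) (h' : OnFall δ' p) (hδ : δ ∈ Ico 0 (1 / 2))
    (hδ' : δ' ∈ Ico 0 (1 / 2)) : δ = δ' := by
  obtain ⟨-, c, hc⟩ := h
  obtain ⟨-, c', hc'⟩ := h'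
  have := eq_of_intCast_add_eq (m := c) (n := c') (s := -δ) (t := -δ')
    (by rw [abs_neg, abs_of_nonneg hδ.1]; exact hδ.2)
    (by rw [abs_neg, abs_of_nonneg hδ'.1]; exact hδ'.2) (by linarith)
  linarith

lemma arc_cases {a b : ℤ} (hab : a < b) (hδ : δ ∈ Ico 0 (1 / 2))
    (hp : p ∈ polyImage (arc a b δ)) :
    OnFoot δ p ∨ (p ∈ segment ℝ !₂[a + δ, 1] (arcApex a b δ) ∧ OnRise δ p) ∨
      (p ∈ segment ℝ (arcApex a b δ) !₂[b - δ, 1] ∧ OnFall δ p) := by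
  have hab' : (a : ℝ) + 1 ≤ b := by exact_mod_cast hab
  rcases arc_trichotomy (by linarith [hδ.2]) hp with ⟨h0, h1, h | h⟩ | ⟨h1, hs, h⟩ | ⟨h1, hs, h⟩
  · exact Or.inl ⟨h0, h1, a, δ, abs_of_nonneg hδ.1, h⟩
  · exact Or.inl ⟨h0, h1, b, -δ, by rw [abs_neg, abs_of_nonneg hδ.1], by rw [h]; ring⟩
  · exact Or.inr (Or.inl ⟨hs, h1, a, h⟩)
  · exact Or.inr (Or.inr ⟨hs, h1, b, h⟩)

end Arc

section ArcDrawing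

variable {G : SimpleGraph V} {x : V → ℤ}

def vertexPos (x : V → ℤ) (v : V) : Pt := !₂[(x v : ℝ), 0]

lemma vertexPos_injective (hx : Injective x) : Injective (vertexPos x) := fun u v h =>
  hx (by simpa [vertexPos] using congrArg (fun p : Pt => p 0) h)

def edgeArc (x : V → ℤ) (δ : ℝ) (e : Sym2 V) : List Pt := arc (e.map x).inf (e.map x).sup δ

lemma inf_lt_sup_map (hx : Injective x) {e : Sym2 V} (he : e ∈ G.edgeSet) :
    (e.map x).inf < (e.map x).sup := by
  induction e using Sym2.ind with
  | _ u v => simpa [eq_comm] using hx.ne (G.ne_of_adj he)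

lemma edgeArc_inter_axis (hx : Injective x) {δ : ℝ} (hδ : δ ≤ 1 / 2) {u v : V}
    (he : s(u, v) ∈ G.edgeSet) :
    polyImage (edgeArc x δ s(u, v)) ∩ {p | p 1 = 0} = {vertexPos x u, vertexPos x v} := by
  have hlt : ((min (x u) (x v) : ℤ) : ℝ) + 1 ≤ (max (x u) (x v) : ℤ) := by
    exact_mod_cast inf_lt_sup_map hx he
  simp only [edgeArc, Sym2.map_mk, Sym2.inf_mk, Sym2.sup_mk]
  rw [polyImage_arc_inter_axis (by linarith)]
  rcases le_total (x u) (x v) with h | h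
  · simp [h, vertexPos]
  · simp [h, vertexPos, pair_comm]

lemma mem_range_vertexPos_of_mem_edgeArc (hx : Injective x) {δ : ℝ} (hδ : δ ≤ 1 / 2)
    {e : Sym2 V} (he : e ∈ G.edgeSet) {p : Pt} (hp : p ∈ polyImage (edgeArc x δ e))
    (h0 : p 1 = 0) : p ∈ range (vertexPos x) := by
  induction e using Sym2.ind with
  | _ u v =>
    rcases (edgeArc_inter_axis hx hδ he).subset ⟨hp, h0⟩ with rfl | rfl <;> exact ⟨_, rfl⟩

variable (hx : Injective x) (δ : G.edgeSet → ℝ) (hδ : ∀ e, δ e ∈ Ico 0 (1 / 2))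

def arcDrawing : GDrawing G where
  pos := vertexPos x
  inj := vertexPos_injective hx
  pts e := edgeArc x (δ e) e
  ends_ok e u v h := by
    rw [h]
    rcases le_total (x u) (x v) with h | h
    · exact Or.inl (by simp [edgeArc, arc, h, vertexPos])
    · exact Or.inr (by simp [edgeArc, arc, h, vertexPos])
  through e u v h := by
    have hr : range (vertexPos x) ⊆ {p | p 1 = 0} := by rintro _ ⟨w, rfl⟩; simp [vertexPos]
    have he := e.2
    rw [h] at he ⊢
    rw [← inter_eq_right.mpr hr, ← inter_assoc, edgeArc_inter_axis hx (hδ e).2.le he,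
      inter_eq_left]
    rintro _ (rfl | rfl) <;> exact ⟨_, rfl⟩

theorem arcDrawing_rac (hδinj : Injective δ) : RACDrawing (arcDrawing hx δ hδ) := by
  intro e₁ e₂ hne p h₁ h₂ hp
  have hδne : δ e₁ ≠ δ e₂ := hδinj.ne hne
  have hp₁ : p 1 ≠ 0 := fun h0 => hp (mem_range_vertexPos_of_mem_edgeArc hx (hδ e₁).2.le e₁.2 h₁ h0)
  rcases arc_cases (inf_lt_sup_map hx e₁.2) (hδ e₁) h₁ with f₁ | ⟨s₁, r₁⟩ | ⟨s₁, l₁⟩ <;>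
    rcases arc_cases (inf_lt_sup_map hx e₂.2) (hδ e₂) h₂ with f₂ | ⟨s₂, r₂⟩ | ⟨s₂, l₂⟩
  · exact absurd (f₁.eq f₂ hp₁ (hδ _).2 (hδ _).2) hδne
  · exact absurd (f₁.eq (r₂.onFoot (hδ _).1 f₁.2.1) hp₁ (hδ _).2 (hδ _).2) hδne
  · exact absurd (f₁.eq (l₂.onFoot (hδ _).1 f₁.2.1) hp₁ (hδ _).2 (hδ _).2) hδne
  · exact absurd ((r₁.onFoot (hδ _).1 f₂.2.1).eq f₂ hp₁ (hδ _).2 (hδ _).2) hδne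
  · exact absurd (r₁.eq r₂ (hδ _) (hδ _)) hδne
  · exact ⟨_, rise_mem_polySegs_arc .., _, fall_mem_polySegs_arc .., s₁, s₂,
      inner_arc_rise_fall ..⟩
  · exact absurd ((l₁.onFoot (hδ _).1 f₂.2.1).eq f₂ hp₁ (hδ _).2 (hδ _).2) hδne
  · exact ⟨_, fall_mem_polySegs_arc .., _, rise_mem_polySegs_arc .., s₁, s₂,
      by rw [real_inner_comm]; exact inner_arc_rise_fall ..⟩
  · exact absurd (l₁.eq l₂ (hδ _) (hδ _)) hδne

end ArcDrawing

/-- Every graph admits a polyline RAC drawing with at most three bends per edge. -/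
theorem three_bend_rac {V : Type*} [Fintype V] (G : SimpleGraph V) :
    ∃ D : GDrawing G, AtMostBends D 3 ∧ RACDrawing D := by
  obtain ⟨x, hx⟩ := exists_injective_nat V
  obtain ⟨δ, hδinj, hδ⟩ := exists_injective_mem_Ico G.edgeSet
  exact ⟨arcDrawing (Nat.cast_injective.comp hx) δ hδ, fun _ => le_rfl,
    arcDrawing_rac _ δ hδ hδinj⟩
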